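/- Let G = (V,E) be a finite undirected simple graph, h a positive integer, v ∈ V, u ∈ N_v^h(G) with s = dis_G(u,v), and w ∈ N_v^{h-s}(G) with w ≠ u. Then dis_{G(V \ {v})}(u,w) ≤ h if and only if dis_{G(N_v^h(G))}(u,w) ≤ h, and in that case the two distances are equal: dis_{G(V \ {v})}(u,w) = dis_{G(N_v^h(G))}(u,w). -/

import Mathlib

open SimpleGraph

variable {V : Type*} [Fintype V] [DecidableEq V]

/-- The subgraph of `G` induced by the vertex set `S`, viewed as a graph on the
same vertex type (edges are exactly the edges of `G` with both endpoints in `S`). -/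
def SimpleGraph.inducedOn (G : SimpleGraph V) (S : Set V) : SimpleGraph V where
  Adj x y := G.Adj x y ∧ x ∈ S ∧ y ∈ S
  symm := ⟨fun _ _ ⟨ha, hx, hy⟩ => ⟨ha.symm, hy, hx⟩⟩
  loopless := ⟨fun _ ⟨ha, _, _⟩ => G.irrefl ha⟩

/-- The `h`-hop neighborhood of `v` in `G`:
all vertices `u ≠ v` with `dis_G(v,u) ≤ h`. -/
def SimpleGraph.hNbhd (G : SimpleGraph V) (h : ℕ) (v : V) : Set V :=
  {u | u ≠ v ∧ G.edist v u ≤ (h : ℕ∞)}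

/-- The `h`-degree of `v` in `G`: the number of vertices in its `h`-hop neighborhood. -/
noncomputable def SimpleGraph.hDeg (G : SimpleGraph V) (h : ℕ) (v : V) : ℕ :=
  (G.hNbhd h v).ncard

/-!
A walk from `u` to `w` in `G - v` of length at most `h` stays inside `N_v^h(G)`: a vertex `x`
splitting it into pieces of lengths `a + b ≤ h` satisfies `dis(v,x) ≤ s + a` and
`dis(v,x) ≤ (h - s) + b`, and the smaller of the two bounds is at most `h`. Such a walk is
therefore a walk of `G(N_v^h(G))`, which gives `dis_{G(N_v^h)} ≤ dis_{G - v}`; the reverse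
inequality holds because `G(N_v^h(G))` is a subgraph of `G - v`.
-/

namespace SimpleGraph

section

omit [Fintype V] [DecidableEq V]

variable {G : SimpleGraph V}

theorem inducedOn_mono {S T : Set V} (hST : S ⊆ T) : G.inducedOn S ≤ G.inducedOn T :=
  fun _ _ ⟨hadj, hx, hy⟩ => ⟨hadj, hST hx, hST hy⟩

theorem inducedOn_le (S : Set V) : G.inducedOn S ≤ G :=
  fun _ _ hadj => hadj.1

theorem hNbhd_subset_compl (h : ℕ) (v : V) : G.hNbhd h v ⊆ {v}ᶜ :=
  fun _ hx => hx.1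

theorem Walk.exists_edist_le_of_mem_support {u w x : V} (p : G.Walk u w) (hx : x ∈ p.support)
    (v : V) : ∃ a b : ℕ, a + b = p.length ∧
      G.edist v x ≤ G.edist v u + a ∧ G.edist v x ≤ G.edist v w + b := by
  obtain ⟨q, r, rfl⟩ := Walk.mem_support_iff_exists_append.mp hx
  refine ⟨q.length, r.length, (Walk.length_append q r).symm, ?_, ?_⟩
  · exact G.edist_triangle.trans (by gcongr; exact edist_le q)
  · exact G.edist_triangle.trans (by gcongr; rw [edist_comm]; exact edist_le r)

theorem Walk.edist_le_of_mem_support_of_length_le {u w x v : V} {h s : ℕ} (p : G.Walk u w)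
    (hx : x ∈ p.support) (hs : G.edist u v = s) (hw : G.edist v w ≤ (h - s : ℕ))
    (hp : p.length ≤ h) : G.edist v x ≤ h := by
  obtain ⟨a, b, hab, hxu, hxw⟩ := p.exists_edist_le_of_mem_support hx v
  have hvu : G.edist v u = s := by rwa [edist_comm]
  rw [hvu] at hxu
  by_cases hsa : s + a ≤ h
  · exact hxu.trans (by exact_mod_cast hsa)
  · calc G.edist v x ≤ ((h - s : ℕ) : ℕ∞) + b := hxw.trans (by gcongr)
      _ ≤ h := by norm_cast; omega

theorem Walk.edist_inducedOn_le_length {S T : Set V} {u w : V} (p : (G.inducedOn T).Walk u w)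
    (hS : ∀ x ∈ p.support, x ∈ T → x ∈ S) : (G.inducedOn S).edist u w ≤ p.length := by
  have hedges : ∀ e ∈ p.edges, e ∈ (G.inducedOn S).edgeSet := by
    intro e he
    induction e with
    | h a b =>
      obtain ⟨hadj, ha, hb⟩ : G.Adj a b ∧ a ∈ T ∧ b ∈ T := p.edges_subset_edgeSet he
      exact ⟨hadj, hS a (p.fst_mem_support_of_mem_edges he) ha,
        hS b (p.snd_mem_support_of_mem_edges he) hb⟩
  rw [← p.length_transfer hedges]
  exact edist_le _

theorem edist_inducedOn_hNbhd_le {u w v : V} {h s : ℕ} (hs : G.edist u v = s)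
    (hw : G.edist v w ≤ (h - s : ℕ)) (hle : (G.inducedOn {v}ᶜ).edist u w ≤ h) :
    (G.inducedOn (G.hNbhd h v)).edist u w ≤ (G.inducedOn {v}ᶜ).edist u w := by
  obtain ⟨p, hp⟩ := exists_walk_of_edist_ne_top (ne_top_of_le_ne_top (ENat.natCast_ne_top h) hle)
  have hlen : p.length ≤ h := by exact_mod_cast hp ▸ hle
  rw [← hp]
  refine p.edist_inducedOn_le_length fun x hx hxv => ⟨hxv, ?_⟩
  exact (p.mapLe (inducedOn_le _)).edist_le_of_mem_support_of_length_le
    (by rwa [Walk.support_mapLe_eq_support]) hs hw (by rwa [Walk.length_mapLe])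

end

end SimpleGraph

theorem stmt6_general (G : SimpleGraph V) (h : ℕ) (v u w : V) (s : ℕ)
    (hs : G.edist u v = (s : ℕ∞))
    (hw : w ∈ G.hNbhd (h - s) v) :
    ((G.inducedOn {v}ᶜ).edist u w ≤ (h : ℕ∞) ↔
      (G.inducedOn (G.hNbhd h v)).edist u w ≤ (h : ℕ∞)) ∧
    ((G.inducedOn {v}ᶜ).edist u w ≤ (h : ℕ∞) →
      (G.inducedOn {v}ᶜ).edist u w = (G.inducedOn (G.hNbhd h v)).edist u w) := by
  have hmono : (G.inducedOn {v}ᶜ).edist u w ≤ (G.inducedOn (G.hNbhd h v)).edist u w :=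
    edist_anti (inducedOn_mono (hNbhd_subset_compl h v))
  have hback := edist_inducedOn_hNbhd_le hs hw.2
  exact ⟨⟨fun hle => (hback hle).trans hle, hmono.trans⟩,
    fun hle => le_antisymm hmono (hback hle)⟩

/-- For `u ∈ N_v^h(G)` with `s = dis_G(u,v)` and `w ∈ N_v^{h-s}(G)`, `w ≠ u`:
`dis_{G(V∖{v})}(u,w) ≤ h` iff `dis_{G(N_v^h(G))}(u,w) ≤ h`, and in that case the
two distances are equal. -/
theorem stmt6 (G : SimpleGraph V) (h : ℕ) (hpos : 0 < h) (v u w : V) (s : ℕ)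
    (hu : u ∈ G.hNbhd h v) (hs : G.edist u v = (s : ℕ∞))
    (hw : w ∈ G.hNbhd (h - s) v) (hwu : w ≠ u) :
    ((G.inducedOn {v}ᶜ).edist u w ≤ (h : ℕ∞) ↔
      (G.inducedOn (G.hNbhd h v)).edist u w ≤ (h : ℕ∞)) ∧
    ((G.inducedOn {v}ᶜ).edist u w ≤ (h : ℕ∞) →
      (G.inducedOn {v}ᶜ).edist u w = (G.inducedOn (G.hNbhd h v)).edist u w) :=
  stmt6_general G h v u w s hs hw
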